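/- (Trace normalization) Let M be a message set whose communication topology is an oriented ring, and let S be a 1-synchronizable M-system. Then for every trace τ of S there exists a normalized trace τ' of S (i.e., τ' = τ₀·!a₁⋯!a_n for some synchronous trace τ₀ and messages a₁,…,a_n) such that τ and τ' are S-equivalent. -/

import Mathlib

/-! Communicating finite state machines: messages, traces, systems. -/

structure MessageSet where
  msgs : Finset ℕ
  p : ℕ
  src : ℕ → ℕ
  dst : ℕ → ℕ

def MessageSet.WF (M : MessageSet) : Prop :=
  1 ≤ M.p ∧ ∀ a ∈ M.msgs, M.src a ≠ M.dst a ∧ M.src a < M.p ∧ M.dst a < M.p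

inductive Act where
  | send (a : ℕ)
  | recv (a : ℕ)
deriving DecidableEq

abbrev Trace := List Act

def Act.msg : Act → ℕ
  | .send a => a
  | .recv a => a

def peerOf (M : MessageSet) : Act → ℕ
  | .send a => M.src a
  | .recv a => M.dst a

/-- Send projection: the sequence of messages sent in a trace. -/
def sendProj (τ : Trace) : List ℕ :=
  τ.filterMap (fun α => match α with | .send a => some a | .recv _ => none)

/-- Projection of a trace on the actions of peer `i`. -/
def projPeer (M : MessageSet) (i : ℕ) (τ : Trace) : Trace :=
  τ.filter (fun α => peerOf M α = i)

def sentOn (M : MessageSet) (i j : ℕ) (τ : Trace) : List ℕ :=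
  τ.filterMap (fun α => match α with
    | .send a => if M.src a = i ∧ M.dst a = j then some a else none
    | .recv _ => none)

def recvOn (M : MessageSet) (i j : ℕ) (τ : Trace) : List ℕ :=
  τ.filterMap (fun α => match α with
    | .recv a => if M.src a = i ∧ M.dst a = j then some a else none
    | .send _ => none)

/-- A trace is FIFO if on every channel, in every prefix, the receives form a
prefix of the sends. -/
def Fifo (M : MessageSet) (τ : Trace) : Prop :=
  ∀ τ', τ' <+: τ → ∀ i j, recvOn M i j τ' <+: sentOn M i j τ'

/-- `k`-bounded FIFO trace: the buffer of each channel never exceeds `k`. -/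
def BoundedFifo (M : MessageSet) (k : ℕ) (τ : Trace) : Prop :=
  Fifo M τ ∧ ∀ τ', τ' <+: τ → ∀ i j,
    (sentOn M i j τ').length ≤ (recvOn M i j τ').length + k

/-- `!?a₁ ⬝ !?a₂ ⋯ !?aₙ` -/
def syncOf (l : List ℕ) : Trace := l.flatMap (fun a => [Act.send a, Act.recv a])

def Synchronous (τ : Trace) : Prop := ∃ l : List ℕ, τ = syncOf l

def CausalEquiv (M : MessageSet) (τ₁ τ₂ : Trace) : Prop :=
  Fifo M τ₁ ∧ Fifo M τ₂ ∧ ∀ i, projPeer M i τ₁ = projPeer M i τ₂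

/-- A system of communicating machines: for each peer `i`, an initial state and
a transition relation (all states are accepting). -/
structure System where
  init : ℕ → ℕ
  delta : ℕ → ℕ → Act → ℕ → Prop

/-- Well-formedness: peer `i` performs only actions of peer `i`, on messages of `M`. -/
def System.WF (S : System) (M : MessageSet) : Prop :=
  ∀ i q α q', S.delta i q α q' → peerOf M α = i ∧ α.msg ∈ M.msgs

/-- The machines are finite-state. -/
def System.FiniteDelta (S : System) : Prop :=
  Set.Finite {x : ℕ × ℕ × Act × ℕ | S.delta x.1 x.2.1 x.2.2.1 x.2.2.2}

/-- A configuration: local states, and one FIFO buffer per channel `(i,j)`. -/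
abbrev Config := (ℕ → ℕ) × (ℕ → ℕ → List ℕ)

def Stable (c : Config) : Prop := ∀ i j, c.2 i j = []

def Step (M : MessageSet) (S : System) (c : Config) : Act → Config → Prop
  | .send a, c' =>
      S.delta (M.src a) (c.1 (M.src a)) (.send a) (c'.1 (M.src a)) ∧
      (∀ k, k ≠ M.src a → c'.1 k = c.1 k) ∧
      c'.2 (M.src a) (M.dst a) = c.2 (M.src a) (M.dst a) ++ [a] ∧
      (∀ k l, ¬(k = M.src a ∧ l = M.dst a) → c'.2 k l = c.2 k l)
  | .recv a, c' =>
      S.delta (M.dst a) (c.1 (M.dst a)) (.recv a) (c'.1 (M.dst a)) ∧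
      (∀ k, k ≠ M.dst a → c'.1 k = c.1 k) ∧
      c.2 (M.src a) (M.dst a) = a :: c'.2 (M.src a) (M.dst a) ∧
      (∀ k l, ¬(k = M.src a ∧ l = M.dst a) → c'.2 k l = c.2 k l)

inductive Exec (M : MessageSet) (S : System) : Config → Trace → Config → Prop
  | refl (c : Config) : Exec M S c [] c
  | step {c c' c'' : Config} {α : Act} {τ : Trace} :
      Step M S c α c' → Exec M S c' τ c'' → Exec M S c (α :: τ) c''

def initConfig (S : System) : Config := (S.init, fun _ _ => [])

def TraceOf (M : MessageSet) (S : System) (τ : Trace) : Prop :=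
  ∃ c, Exec M S (initConfig S) τ c

/-- `Trk M S 0` = synchronous traces; `Trk M S k` (`k ≥ 1`) = `k`-bounded traces. -/
def Trk (M : MessageSet) (S : System) : ℕ → Trace → Prop
  | 0, τ => TraceOf M S τ ∧ Synchronous τ
  | (k+1), τ => TraceOf M S τ ∧ BoundedFifo M (k+1) τ

def Trω (M : MessageSet) (S : System) (τ : Trace) : Prop := ∃ k, Trk M S k τ

/-- Two traces are `S`-equivalent if they lead from the initial configuration to
a common configuration. -/
def SEquiv (M : MessageSet) (S : System) (τ₁ τ₂ : Trace) : Prop :=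
  ∃ c, Exec M S (initConfig S) τ₁ c ∧ Exec M S (initConfig S) τ₂ c

/-- Send-trace language. -/
def STw (M : MessageSet) (S : System) (T : Trace → Prop) : Set (List ℕ) :=
  {w | ∃ τ, T τ ∧ sendProj τ = w}

/-- Send traces enriched with the reached stable configurations. -/
def STc (M : MessageSet) (S : System) (T : Trace → Prop) :
    Set (List ℕ ⊕ List ℕ × Config) :=
  {x | (∃ τ, T τ ∧ x = Sum.inl (sendProj τ)) ∨
       (∃ τ c, T τ ∧ Exec M S (initConfig S) τ c ∧ Stable c ∧
          x = Sum.inr (sendProj τ, c))}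

def kSync (M : MessageSet) (S : System) (k : ℕ) : Prop :=
  STc M S (Trk M S 0) = STc M S (Trk M S k)

def Synchronizable (M : MessageSet) (S : System) : Prop :=
  STc M S (Trk M S 0) = STc M S (Trω M S)

def LangSync (M : MessageSet) (S : System) : Prop :=
  STw M S (Trk M S 0) = STw M S (Trω M S)

inductive Shuffle : List Act → List Act → List Act → Prop
  | nil : Shuffle [] [] []
  | left {u v w : List Act} (a : Act) : Shuffle u v w → Shuffle (a :: u) v (a :: w)
  | right {u v w : List Act} (b : Act) : Shuffle u v w → Shuffle u (b :: v) (b :: w)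

inductive NShuffle : List ℕ → List ℕ → List ℕ → Prop
  | nil : NShuffle [] [] []
  | left {u v w : List ℕ} (a : ℕ) : NShuffle u v w → NShuffle (a :: u) v (a :: w)
  | right {u v w : List ℕ} (b : ℕ) : NShuffle u v w → NShuffle u (b :: v) (b :: w)

inductive PPath (S : System) (i : ℕ) : ℕ → Trace → Prop
  | nil (q : ℕ) : PPath S i q []
  | cons {q q' : ℕ} {α : Act} {w : Trace} :
      S.delta i q α q' → PPath S i q' w → PPath S i q (α :: w)

/-- The language of peer `i` (all states accepting). -/
def Lang (S : System) (i : ℕ) : Set Trace := {w | PPath S i (S.init i) w}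

def prefCl (L : Set Trace) : Set Trace := {w | ∃ v ∈ L, w <+: v}

def OrientedRing (M : MessageSet) : Prop :=
  1 ≤ M.p ∧ ∀ i j, (∃ a ∈ M.msgs, M.src a = i ∧ M.dst a = j) ↔
    (i < M.p ∧ j = (i + 1) % M.p)
/-! ### Auxiliary development -/

section Aux

variable {M : MessageSet} {S : System}

/-- Local transition paths with explicit endpoints. -/
inductive DPath (S : System) (i : ℕ) : ℕ → Trace → ℕ → Prop
  | nil (q : ℕ) : DPath S i q [] q
  | cons {q q' q'' : ℕ} {α : Act} {w : Trace} :
      S.delta i q α q' → DPath S i q' w q'' → DPath S i q (α :: w) q''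

lemma DPath.append {i q m r : ℕ} {w₁ w₂ : Trace}
    (h1 : DPath S i q w₁ m) (h2 : DPath S i m w₂ r) : DPath S i q (w₁ ++ w₂) r := by
  induction h1 with
  | nil => simpa using h2
  | cons hd _ ih => exact DPath.cons hd (ih h2)

lemma dpath_nil {i q r : ℕ} (h : DPath S i q [] r) : r = q := by
  cases h; rfl

lemma dpath_cons {i q r : ℕ} {α : Act} {w : Trace} (h : DPath S i q (α :: w) r) :
    ∃ m, S.delta i q α m ∧ DPath S i m w r := by
  cases h with
  | cons hd ht => exact ⟨_, hd, ht⟩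

lemma DPath.split {i q r : ℕ} {w₁ w₂ : Trace}
    (h : DPath S i q (w₁ ++ w₂) r) : ∃ m, DPath S i q w₁ m ∧ DPath S i m w₂ r := by
  induction w₁ generalizing q with
  | nil => exact ⟨q, DPath.nil q, by simpa using h⟩
  | cons α w ih =>
    obtain ⟨m, hd, ht⟩ := dpath_cons h
    obtain ⟨m', h1, h2⟩ := ih ht
    exact ⟨m', DPath.cons hd h1, h2⟩

lemma exec_append {c d e : Config} {τ₁ τ₂ : Trace}
    (h1 : Exec M S c τ₁ d) (h2 : Exec M S d τ₂ e) : Exec M S c (τ₁ ++ τ₂) e := by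
  induction h1 with
  | refl => simpa using h2
  | step hs _ ih => exact Exec.step hs (ih h2)

lemma exec_nil {c d : Config} (h : Exec M S c [] d) : d = c := by
  cases h; rfl

lemma exec_split {c e : Config} {τ₁ τ₂ : Trace}
    (h : Exec M S c (τ₁ ++ τ₂) e) : ∃ d, Exec M S c τ₁ d ∧ Exec M S d τ₂ e := by
  induction τ₁ generalizing c with
  | nil => exact ⟨c, Exec.refl c, by simpa using h⟩
  | cons α w ih =>
    cases h with
    | step hs ht =>
      obtain ⟨d, h1, h2⟩ := ih ht
      exact ⟨d, Exec.step hs h1, h2⟩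

lemma exec_single {c d : Config} {α : Act} (h : Exec M S c [α] d) : Step M S c α d := by
  cases h with
  | step hs ht => cases ht; exact hs

lemma exec_snoc {c d : Config} {τ : Trace} {α : Act}
    (h : Exec M S c (τ ++ [α]) d) : ∃ m, Exec M S c τ m ∧ Step M S m α d := by
  obtain ⟨m, h1, h2⟩ := exec_split h
  exact ⟨m, h1, exec_single h2⟩

lemma exec_congr {c d : Config} {τ : Trace} (h : Exec M S c τ d)
    (d' : Config) (h1 : ∀ i, d.1 i = d'.1 i) (h2 : ∀ i j, d.2 i j = d'.2 i j) :
    Exec M S c τ d' := by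
  have : d = d' := by
    apply Prod.ext
    · funext i; exact h1 i
    · funext i j; exact h2 i j
  exact this ▸ h

/-- Explicit successor configuration for a send step. -/
def sendConf (M : MessageSet) (c : Config) (a : ℕ) (q' : ℕ) : Config :=
  (Function.update c.1 (M.src a) q',
   fun k l => if k = M.src a ∧ l = M.dst a then c.2 k l ++ [a] else c.2 k l)

/-- Explicit successor configuration for a receive step. -/
def recvConf (M : MessageSet) (c : Config) (a : ℕ) (q' : ℕ) : Config :=
  (Function.update c.1 (M.dst a) q',
   fun k l => if k = M.src a ∧ l = M.dst a then (c.2 k l).tail else c.2 k l)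

lemma step_send {c : Config} {a q' : ℕ}
    (h : S.delta (M.src a) (c.1 (M.src a)) (.send a) q') :
    Step M S c (.send a) (sendConf M c a q') := by
  refine ⟨by simpa [sendConf] using h, ?_, by simp [sendConf], ?_⟩
  · intro k hk; simp [sendConf, Function.update_of_ne hk]
  · intro k l hkl; simp only [sendConf]; rw [if_neg hkl]

lemma step_recv {c : Config} {a q' : ℕ} {t : List ℕ}
    (h : S.delta (M.dst a) (c.1 (M.dst a)) (.recv a) q')
    (hb : c.2 (M.src a) (M.dst a) = a :: t) :
    Step M S c (.recv a) (recvConf M c a q') := by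
  refine ⟨by simpa [recvConf] using h, ?_, by simp [recvConf, hb], ?_⟩
  · intro k hk; simp [recvConf, Function.update_of_ne hk]
  · intro k l hkl; simp only [recvConf]; rw [if_neg hkl]

end Aux
section Aux2

variable {M : MessageSet} {S : System}

lemma projPeer_nil (i : ℕ) : projPeer M i [] = [] := rfl

lemma projPeer_cons (i : ℕ) (α : Act) (τ : Trace) :
    projPeer M i (α :: τ) =
      (if peerOf M α = i then [α] else []) ++ projPeer M i τ := by
  by_cases h : peerOf M α = i <;> simp [projPeer, List.filter_cons, h]

lemma projPeer_append (i : ℕ) (τ₁ τ₂ : Trace) :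
    projPeer M i (τ₁ ++ τ₂) = projPeer M i τ₁ ++ projPeer M i τ₂ := by
  simp [projPeer, List.filter_append]

lemma exec_proj {c d : Config} {τ : Trace} (h : Exec M S c τ d) (i : ℕ) :
    DPath S i (c.1 i) (projPeer M i τ) (d.1 i) := by
  induction h with
  | refl c => exact DPath.nil _
  | @step c c' c'' α τ hs he ih =>
    rw [projPeer_cons]
    cases α with
    | send a =>
      by_cases hi : peerOf M (Act.send a) = i
      · have hsrc : M.src a = i := hi
        rw [if_pos hi]
        refine DPath.cons ?_ ih
        rw [← hsrc] at *
        exact hs.1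
      · rw [if_neg hi, List.nil_append]
        have : c'.1 i = c.1 i := hs.2.1 i (fun he' => hi (by simpa [peerOf] using he'.symm))
        rwa [← this]
    | recv a =>
      by_cases hi : peerOf M (Act.recv a) = i
      · have hdst : M.dst a = i := hi
        rw [if_pos hi]
        refine DPath.cons ?_ ih
        rw [← hdst] at *
        exact hs.1
      · rw [if_neg hi, List.nil_append]
        have : c'.1 i = c.1 i := hs.2.1 i (fun he' => hi (by simpa [peerOf] using he'.symm))
        rwa [← this]

lemma sentOn_nil (i j : ℕ) : sentOn M i j [] = [] := rfl
lemma recvOn_nil (i j : ℕ) : recvOn M i j [] = [] := rfl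

lemma sentOn_append (i j : ℕ) (τ₁ τ₂ : Trace) :
    sentOn M i j (τ₁ ++ τ₂) = sentOn M i j τ₁ ++ sentOn M i j τ₂ := by
  simp [sentOn, List.filterMap_append]

lemma recvOn_append (i j : ℕ) (τ₁ τ₂ : Trace) :
    recvOn M i j (τ₁ ++ τ₂) = recvOn M i j τ₁ ++ recvOn M i j τ₂ := by
  simp [recvOn, List.filterMap_append]

lemma sentOn_cons_send (i j a : ℕ) (τ : Trace) :
    sentOn M i j (Act.send a :: τ) =
      (if M.src a = i ∧ M.dst a = j then [a] else []) ++ sentOn M i j τ := by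
  by_cases h : M.src a = i ∧ M.dst a = j <;> simp [sentOn, h]

lemma sentOn_cons_recv (i j a : ℕ) (τ : Trace) :
    sentOn M i j (Act.recv a :: τ) = sentOn M i j τ := by
  simp [sentOn]

lemma recvOn_cons_recv (i j a : ℕ) (τ : Trace) :
    recvOn M i j (Act.recv a :: τ) =
      (if M.src a = i ∧ M.dst a = j then [a] else []) ++ recvOn M i j τ := by
  by_cases h : M.src a = i ∧ M.dst a = j <;> simp [recvOn, h]

lemma recvOn_cons_send (i j a : ℕ) (τ : Trace) :
    recvOn M i j (Act.send a :: τ) = recvOn M i j τ := by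
  simp [recvOn]

/-- Buffer/channel bookkeeping identity along an execution. -/
lemma exec_chan {c d : Config} {τ : Trace} (h : Exec M S c τ d) (i j : ℕ) :
    c.2 i j ++ sentOn M i j τ = recvOn M i j τ ++ d.2 i j := by
  induction h with
  | refl c => simp [sentOn_nil, recvOn_nil]
  | @step c c' c'' α τ hs he ih =>
    cases α with
    | send a =>
      rw [sentOn_cons_send, recvOn_cons_send]
      by_cases hij : M.src a = i ∧ M.dst a = j
      · have hb : c'.2 i j = c.2 i j ++ [a] := by
          rw [← hij.1, ← hij.2]; exact hs.2.2.1
        rw [if_pos hij, ← List.append_assoc]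
        rw [← hb]; exact ih
      · have hb : c'.2 i j = c.2 i j := by
          have := hs.2.2.2 i j (by tauto)
          exact this
        rw [if_neg hij, List.nil_append, ← hb]; exact ih
    | recv a =>
      rw [sentOn_cons_recv, recvOn_cons_recv]
      by_cases hij : M.src a = i ∧ M.dst a = j
      · have hb : c.2 i j = a :: c'.2 i j := by
          rw [← hij.1, ← hij.2]; exact hs.2.2.1
        rw [if_pos hij, hb]
        simpa using ih
      · have hb : c'.2 i j = c.2 i j := hs.2.2.2 i j (by tauto)
        rw [if_neg hij, List.nil_append, ← hb]; exact ih

lemma exec_fifo {d : Config} {τ : Trace} (h : Exec M S (initConfig S) τ d) :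
    Fifo M τ := by
  intro τ' hpre i j
  obtain ⟨t, rfl⟩ := hpre
  obtain ⟨m, h1, _⟩ := exec_split h
  have := exec_chan h1 i j
  simp [initConfig] at this
  exact ⟨m.2 i j, this.symm⟩

lemma exec_len {d : Config} {τ : Trace} (h : Exec M S (initConfig S) τ d) (i j : ℕ) :
    (sentOn M i j τ).length = (recvOn M i j τ).length + (d.2 i j).length := by
  have := exec_chan h i j
  simp [initConfig] at this
  rw [this, List.length_append]

lemma exec_msgs {c d : Config} {τ : Trace} (h : Exec M S c τ d) (hS : S.WF M) :
    ∀ α ∈ τ, α.msg ∈ M.msgs := by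
  induction h with
  | refl => simp
  | @step c c' c'' α τ hs he ih =>
    intro β hβ
    rcases List.mem_cons.1 hβ with rfl | hβ
    · cases β with
      | send a => exact (hS _ _ _ _ hs.1).2
      | recv a => exact (hS _ _ _ _ hs.1).2
    · exact ih β hβ

lemma syncOf_nil : syncOf [] = [] := rfl

lemma syncOf_cons (a : ℕ) (l : List ℕ) :
    syncOf (a :: l) = Act.send a :: Act.recv a :: syncOf l := rfl

lemma syncOf_append (l₁ l₂ : List ℕ) :
    syncOf (l₁ ++ l₂) = syncOf l₁ ++ syncOf l₂ := by
  simp [syncOf]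

lemma sendProj_nil : sendProj [] = [] := rfl

lemma sendProj_append (τ₁ τ₂ : Trace) :
    sendProj (τ₁ ++ τ₂) = sendProj τ₁ ++ sendProj τ₂ := by
  simp [sendProj, List.filterMap_append]

lemma sendProj_syncOf (l : List ℕ) : sendProj (syncOf l) = l := by
  induction l with
  | nil => rfl
  | cons a l ih => simp [syncOf_cons, sendProj, List.filterMap_cons] at ih ⊢; exact ih

lemma sendProj_map_send (l : List ℕ) : sendProj (l.map Act.send) = l := by
  induction l with
  | nil => rfl
  | cons a l ih => simp [sendProj, List.filterMap_cons] at ih ⊢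

lemma synchronous_eq {σ : Trace} (h : Synchronous σ) : σ = syncOf (sendProj σ) := by
  obtain ⟨l, rfl⟩ := h
  rw [sendProj_syncOf]

end Aux2
section Aux3

variable {M : MessageSet} {S : System}

/-- Messages of a name list on channel `(i,j)`. -/
def chanL (M : MessageSet) (i j : ℕ) (l : List ℕ) : List ℕ :=
  l.filterMap (fun x => if M.src x = i ∧ M.dst x = j then some x else none)

/-- Messages of a name list sent by peer `i`. -/
def perS (M : MessageSet) (i : ℕ) (l : List ℕ) : List ℕ :=
  l.filterMap (fun x => if M.src x = i then some x else none)

lemma chanL_nil (i j : ℕ) : chanL M i j [] = [] := rfl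

lemma chanL_cons (i j x : ℕ) (l : List ℕ) :
    chanL M i j (x :: l) =
      (if M.src x = i ∧ M.dst x = j then [x] else []) ++ chanL M i j l := by
  by_cases h : M.src x = i ∧ M.dst x = j <;> simp [chanL, h]

lemma chanL_append (i j : ℕ) (l₁ l₂ : List ℕ) :
    chanL M i j (l₁ ++ l₂) = chanL M i j l₁ ++ chanL M i j l₂ := by
  simp [chanL, List.filterMap_append]

lemma chanL_all {i j : ℕ} {l : List ℕ} (h : ∀ x ∈ l, M.src x = i ∧ M.dst x = j) :
    chanL M i j l = l := by
  induction l with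
  | nil => rfl
  | cons x l ih =>
    rw [chanL_cons, if_pos (h x (by simp)), ih (fun y hy => h y (by simp [hy]))]
    rfl

lemma chanL_none {i j : ℕ} {l : List ℕ} (h : ∀ x ∈ l, ¬(M.src x = i ∧ M.dst x = j)) :
    chanL M i j l = [] := by
  induction l with
  | nil => rfl
  | cons x l ih =>
    rw [chanL_cons, if_neg (h x (by simp)), ih (fun y hy => h y (by simp [hy]))]
    rfl

lemma chanL_mem {i j x : ℕ} {l : List ℕ} (h : x ∈ chanL M i j l) :
    x ∈ l ∧ M.src x = i ∧ M.dst x = j := by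
  induction l with
  | nil => simp [chanL_nil] at h
  | cons y l ih =>
    rw [chanL_cons] at h
    by_cases hy : M.src y = i ∧ M.dst y = j
    · rw [if_pos hy] at h
      rcases List.mem_append.1 h with h | h
      · simp at h; subst h; exact ⟨by simp, hy⟩
      · obtain ⟨h1, h2⟩ := ih h; exact ⟨by simp [h1], h2⟩
    · rw [if_neg hy, List.nil_append] at h
      obtain ⟨h1, h2⟩ := ih h; exact ⟨by simp [h1], h2⟩

lemma perS_nil (i : ℕ) : perS M i [] = [] := rfl

lemma perS_cons (i x : ℕ) (l : List ℕ) :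
    perS M i (x :: l) = (if M.src x = i then [x] else []) ++ perS M i l := by
  by_cases h : M.src x = i <;> simp [perS, h]

lemma perS_append (i : ℕ) (l₁ l₂ : List ℕ) :
    perS M i (l₁ ++ l₂) = perS M i l₁ ++ perS M i l₂ := by
  simp [perS, List.filterMap_append]

lemma perS_mem {i x : ℕ} {l : List ℕ} (h : x ∈ perS M i l) : x ∈ l ∧ M.src x = i := by
  induction l with
  | nil => simp [perS_nil] at h
  | cons y l ih =>
    rw [perS_cons] at h
    by_cases hy : M.src y = i
    · rw [if_pos hy] at h
      rcases List.mem_append.1 h with h | h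
      · simp at h; subst h; exact ⟨by simp, hy⟩
      · obtain ⟨h1, h2⟩ := ih h; exact ⟨by simp [h1], h2⟩
    · rw [if_neg hy, List.nil_append] at h
      obtain ⟨h1, h2⟩ := ih h; exact ⟨by simp [h1], h2⟩

lemma perS_all {i : ℕ} {l : List ℕ} (h : ∀ x ∈ l, M.src x = i) : perS M i l = l := by
  induction l with
  | nil => rfl
  | cons x l ih =>
    rw [perS_cons, if_pos (h x (by simp)), ih (fun y hy => h y (by simp [hy]))]
    rfl

lemma perS_none {i : ℕ} {l : List ℕ} (h : ∀ x ∈ l, M.src x ≠ i) : perS M i l = [] := by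
  induction l with
  | nil => rfl
  | cons x l ih =>
    rw [perS_cons, if_neg (h x (by simp)), ih (fun y hy => h y (by simp [hy]))]
    rfl

lemma chanL_perS (i j : ℕ) (l : List ℕ) : chanL M i j (perS M i l) = chanL M i j l := by
  induction l with
  | nil => rfl
  | cons x l ih =>
    rw [perS_cons, chanL_append, chanL_cons, ih]
    by_cases h : M.src x = i
    · rw [if_pos h, chanL_cons, chanL_nil, List.append_nil]
    · rw [if_neg h, chanL_nil, if_neg (fun hc : M.src x = i ∧ M.dst x = j => h hc.1)]

lemma sentOn_map_send (i j : ℕ) (xs : List ℕ) :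
    sentOn M i j (xs.map Act.send) = chanL M i j xs := by
  induction xs with
  | nil => rfl
  | cons x l ih => rw [List.map_cons, sentOn_cons_send, chanL_cons, ih]

lemma recvOn_map_send (i j : ℕ) (xs : List ℕ) :
    recvOn M i j (xs.map Act.send) = [] := by
  induction xs with
  | nil => rfl
  | cons x l ih => rw [List.map_cons, recvOn_cons_send, ih]

lemma sentOn_syncOf (i j : ℕ) (u : List ℕ) :
    sentOn M i j (syncOf u) = chanL M i j u := by
  induction u with
  | nil => rfl
  | cons x l ih =>
    rw [syncOf_cons, sentOn_cons_send, sentOn_cons_recv, chanL_cons, ih]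

lemma recvOn_syncOf (i j : ℕ) (u : List ℕ) :
    recvOn M i j (syncOf u) = chanL M i j u := by
  induction u with
  | nil => rfl
  | cons x l ih =>
    rw [syncOf_cons, recvOn_cons_send, recvOn_cons_recv, chanL_cons, ih]

lemma projPeer_map_send (i : ℕ) (xs : List ℕ) :
    projPeer M i (xs.map Act.send) = (perS M i xs).map Act.send := by
  induction xs with
  | nil => rfl
  | cons x l ih =>
    rw [List.map_cons, projPeer_cons, perS_cons, ih]
    by_cases h : M.src x = i
    · rw [if_pos (show peerOf M (Act.send x) = i from h), if_pos h]; rfl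
    · rw [if_neg (show ¬ peerOf M (Act.send x) = i from h), if_neg h]; rfl

lemma projPeer_syncOf_cons (i a : ℕ) (u : List ℕ) :
    projPeer M i (syncOf (a :: u)) =
      ((if M.src a = i then [Act.send a] else []) ++ (if M.dst a = i then [Act.recv a] else []))
        ++ projPeer M i (syncOf u) := by
  rw [syncOf_cons, projPeer_cons, projPeer_cons]
  by_cases h1 : M.src a = i <;> by_cases h2 : M.dst a = i <;>
    simp [peerOf, h1, h2]

lemma projPeer_syncOf_sends {i : ℕ} {u : List ℕ}
    (h : ∀ x ∈ u, M.src x = i ∧ M.dst x ≠ i) :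
    projPeer M i (syncOf u) = u.map Act.send := by
  induction u with
  | nil => rfl
  | cons x l ih =>
    rw [projPeer_syncOf_cons, if_pos (h x (by simp)).1, if_neg (h x (by simp)).2,
      ih (fun y hy => h y (by simp [hy]))]
    rfl

lemma projPeer_syncOf_nil {i : ℕ} {u : List ℕ}
    (h : ∀ x ∈ u, M.src x ≠ i ∧ M.dst x ≠ i) :
    projPeer M i (syncOf u) = [] := by
  induction u with
  | nil => rfl
  | cons x l ih =>
    rw [projPeer_syncOf_cons, if_neg (h x (by simp)).1, if_neg (h x (by simp)).2,
      ih (fun y hy => h y (by simp [hy]))]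
    rfl

end Aux3
section Aux4

variable {M : MessageSet} {S : System}

lemma sync_assemble :
    ∀ (u : List ℕ) (c : Config) (t : ℕ → ℕ),
      (∀ x ∈ u, M.src x ≠ M.dst x) →
      (∀ x ∈ u, c.2 (M.src x) (M.dst x) = []) →
      (∀ i, DPath S i (c.1 i) (projPeer M i (syncOf u)) (t i)) →
      ∃ d : Config, Exec M S c (syncOf u) d ∧ (∀ i, d.1 i = t i) ∧ (∀ i j, d.2 i j = c.2 i j) := by
  intro u
  induction u with
  | nil =>
    intro c t _ _ hp
    refine ⟨c, Exec.refl c, fun i => ?_, fun i j => rfl⟩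
    have := hp i
    rw [syncOf_nil, projPeer_nil] at this
    exact (dpath_nil this).symm
  | cons x u ih =>
    intro c t hsd hbuf hp
    have hx : M.src x ≠ M.dst x := hsd x (by simp)
    have hps : projPeer M (M.src x) (syncOf (x :: u)) =
        Act.send x :: projPeer M (M.src x) (syncOf u) := by
      rw [projPeer_syncOf_cons, if_pos rfl, if_neg (fun h => hx h.symm)]
      rfl
    have hpd : projPeer M (M.dst x) (syncOf (x :: u)) =
        Act.recv x :: projPeer M (M.dst x) (syncOf u) := by
      rw [projPeer_syncOf_cons, if_neg hx, if_pos rfl]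
      rfl
    obtain ⟨m₁, hd₁, hrest₁⟩ := dpath_cons (by rw [← hps]; exact hp (M.src x))
    set c₁ := sendConf M c x m₁ with hc₁
    have hstep₁ : Step M S c (Act.send x) c₁ := step_send hd₁
    have hc₁st : ∀ i, c₁.1 i = if i = M.src x then m₁ else c.1 i := by
      intro i
      by_cases hi : i = M.src x
      · subst hi; simp [hc₁, sendConf]
      · simp [hc₁, sendConf, Function.update_of_ne hi, hi]
    have hc₁buf : ∀ i j, c₁.2 i j = if i = M.src x ∧ j = M.dst x then c.2 i j ++ [x] else c.2 i j := by
      intro i j; rfl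
    obtain ⟨m₂, hd₂, hrest₂⟩ := dpath_cons (by
      rw [← hpd]
      have h0 := hp (M.dst x)
      have hst : c₁.1 (M.dst x) = c.1 (M.dst x) := by
        rw [hc₁st, if_neg (fun h => hx h.symm)]
      rw [← hst] at h0
      exact h0)
    set c₂ := recvConf M c₁ x m₂ with hc₂
    have hbx : c₁.2 (M.src x) (M.dst x) = x :: ([] : List ℕ) := by
      rw [hc₁buf, if_pos ⟨rfl, rfl⟩, hbuf x (by simp)]
      rfl
    have hstep₂ : Step M S c₁ (Act.recv x) c₂ := step_recv hd₂ hbx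
    have hc₂st : ∀ i, c₂.1 i = if i = M.dst x then m₂ else c₁.1 i := by
      intro i
      by_cases hi : i = M.dst x
      · subst hi; simp [hc₂, recvConf]
      · simp [hc₂, recvConf, Function.update_of_ne hi, hi]
    have hc₂buf : ∀ i j, c₂.2 i j = c.2 i j := by
      intro i j
      by_cases hij : i = M.src x ∧ j = M.dst x
      · have h1 : c₂.2 i j = (c₁.2 i j).tail := by
          simp only [hc₂, recvConf]
          rw [if_pos hij]
        rw [h1, hij.1, hij.2, hbx, hbuf x (by simp)]
        rfl
      · have h2 : c₂.2 i j = c₁.2 i j := by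
          simp only [hc₂, recvConf]
          rw [if_neg hij]
        rw [h2, hc₁buf, if_neg hij]
    have hpaths : ∀ i, DPath S i (c₂.1 i) (projPeer M i (syncOf u)) (t i) := by
      intro i
      by_cases hi1 : i = M.src x
      · subst hi1
        have h1 : c₂.1 (M.src x) = m₁ := by
          rw [hc₂st, if_neg (fun h => hx h), hc₁st, if_pos rfl]
        rw [h1]
        exact hrest₁
      · by_cases hi2 : i = M.dst x
        · subst hi2
          have h1 : c₂.1 (M.dst x) = m₂ := by rw [hc₂st, if_pos rfl]
          rw [h1]
          exact hrest₂
        · have hst : c₂.1 i = c.1 i := by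
            rw [hc₂st, if_neg hi2, hc₁st, if_neg hi1]
          rw [hst]
          have hproj : projPeer M i (syncOf (x :: u)) = projPeer M i (syncOf u) := by
            rw [projPeer_syncOf_cons, if_neg (fun h => hi1 h.symm), if_neg (fun h => hi2 h.symm)]
            rfl
          rw [← hproj]
          exact hp i
    obtain ⟨d, hexec, hd1, hd2⟩ := ih c₂ t (fun y hy => hsd y (by simp [hy]))
      (fun y hy => by rw [hc₂buf]; exact hbuf y (by simp [hy])) hpaths
    refine ⟨d, ?_, hd1, fun i j => by rw [hd2 i j, hc₂buf]⟩
    rw [syncOf_cons]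
    exact Exec.step hstep₁ (Exec.step hstep₂ hexec)

lemma sends_assemble :
    ∀ (xs : List ℕ) (c : Config) (t : ℕ → ℕ),
      (∀ i, DPath S i (c.1 i) (projPeer M i (xs.map Act.send)) (t i)) →
      ∃ d : Config, Exec M S c (xs.map Act.send) d ∧ (∀ i, d.1 i = t i) ∧
        (∀ i j, d.2 i j = c.2 i j ++ chanL M i j xs) := by
  intro xs
  induction xs with
  | nil =>
    intro c t hp
    refine ⟨c, Exec.refl c, fun i => ?_, fun i j => by rw [chanL_nil, List.append_nil]⟩
    have := hp i
    rw [List.map_nil, projPeer_nil] at this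
    exact (dpath_nil this).symm
  | cons x xs ih =>
    intro c t hp
    have hps : projPeer M (M.src x) ((x :: xs).map Act.send) =
        Act.send x :: projPeer M (M.src x) (xs.map Act.send) := by
      rw [List.map_cons, projPeer_cons, if_pos (show peerOf M (Act.send x) = M.src x from rfl)]
      rfl
    obtain ⟨m₁, hd₁, hrest₁⟩ := dpath_cons (by rw [← hps]; exact hp (M.src x))
    set c₁ := sendConf M c x m₁ with hc₁
    have hstep₁ : Step M S c (Act.send x) c₁ := step_send hd₁
    have hc₁st : ∀ i, c₁.1 i = if i = M.src x then m₁ else c.1 i := by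
      intro i
      by_cases hi : i = M.src x
      · subst hi; simp [hc₁, sendConf]
      · simp [hc₁, sendConf, Function.update_of_ne hi, hi]
    have hc₁buf : ∀ i j, c₁.2 i j = if i = M.src x ∧ j = M.dst x then c.2 i j ++ [x] else c.2 i j := by
      intro i j; rfl
    have hpaths : ∀ i, DPath S i (c₁.1 i) (projPeer M i (xs.map Act.send)) (t i) := by
      intro i
      by_cases hi1 : i = M.src x
      · subst hi1
        have h1 : c₁.1 (M.src x) = m₁ := by rw [hc₁st, if_pos rfl]
        rw [h1]
        exact hrest₁
      · have hst : c₁.1 i = c.1 i := by rw [hc₁st, if_neg hi1]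
        rw [hst]
        have hproj : projPeer M i ((x :: xs).map Act.send) = projPeer M i (xs.map Act.send) := by
          rw [List.map_cons, projPeer_cons,
            if_neg (show ¬ peerOf M (Act.send x) = i from fun h => hi1 h.symm)]
          rfl
        rw [← hproj]
        exact hp i
    obtain ⟨d, hexec, hd1, hd2⟩ := ih c₁ t hpaths
    refine ⟨d, ?_, hd1, fun i j => ?_⟩
    · rw [List.map_cons]
      exact Exec.step hstep₁ hexec
    · rw [hd2, hc₁buf, chanL_cons]
      by_cases hij : i = M.src x ∧ j = M.dst x
      · rw [if_pos hij, if_pos ⟨hij.1.symm, hij.2.symm⟩, List.append_assoc]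
      · rw [if_neg hij,
          if_neg (show ¬(M.src x = i ∧ M.dst x = j) from fun h => hij ⟨h.1.symm, h.2.symm⟩),
          List.nil_append]

end Aux4
section Aux5

variable {M : MessageSet} {S : System}

lemma prefix_append_cases {α : Type} {τ A B : List α} (h : τ <+: A ++ B) :
    τ <+: A ∨ ∃ η, τ = A ++ η ∧ η <+: B := by
  induction A generalizing τ with
  | nil => exact Or.inr ⟨τ, rfl, by simpa using h⟩
  | cons x A ih =>
    cases τ with
    | nil => exact Or.inl (List.nil_prefix)
    | cons y τ' =>
      rw [List.cons_append, List.cons_prefix_cons] at h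
      obtain ⟨rfl, h⟩ := h
      rcases ih h with h' | ⟨η, rfl, hη⟩
      · exact Or.inl (List.cons_prefix_cons.2 ⟨rfl, h'⟩)
      · exact Or.inr ⟨η, rfl, hη⟩

lemma syncOf_prefix {τ : Trace} {u : List ℕ} (h : τ <+: syncOf u) :
    (∃ u₁, u₁ <+: u ∧ τ = syncOf u₁) ∨
    (∃ u₁ x, (u₁ ++ [x]) <+: u ∧ τ = syncOf u₁ ++ [Act.send x]) := by
  induction u generalizing τ with
  | nil =>
    left
    exact ⟨[], List.nil_prefix, by simpa [syncOf_nil] using h⟩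
  | cons x u ih =>
    rw [syncOf_cons] at h
    cases τ with
    | nil => exact Or.inl ⟨[], List.nil_prefix, rfl⟩
    | cons y τ' =>
      rw [List.cons_prefix_cons] at h
      obtain ⟨rfl, h⟩ := h
      cases τ' with
      | nil =>
        right
        exact ⟨[], x, ⟨u, rfl⟩, rfl⟩
      | cons z τ'' =>
        rw [List.cons_prefix_cons] at h
        obtain ⟨rfl, h⟩ := h
        rcases ih h with ⟨u₁, hu₁, rfl⟩ | ⟨u₁, w, hu₁, rfl⟩
        · left
          refine ⟨x :: u₁, ?_, by rw [syncOf_cons]⟩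
          obtain ⟨r, rfl⟩ := hu₁
          exact ⟨r, rfl⟩
        · right
          refine ⟨x :: u₁, w, ?_, by rw [syncOf_cons]; rfl⟩
          obtain ⟨r, rfl⟩ := hu₁
          exact ⟨r, rfl⟩

/-- Length bound on a channel for prefixes of a synchronous trace. -/
lemma syncOf_prefix_bound {τ : Trace} {u : List ℕ} (h : τ <+: syncOf u) (i j : ℕ) :
    (sentOn M i j τ).length ≤ (recvOn M i j τ).length + 1 ∧
    recvOn M i j τ <+: sentOn M i j τ := by
  rcases syncOf_prefix h with ⟨u₁, _, rfl⟩ | ⟨u₁, x, _, rfl⟩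
  · rw [sentOn_syncOf, recvOn_syncOf]
    exact ⟨by omega, List.prefix_refl _⟩
  · rw [sentOn_append, recvOn_append, sentOn_syncOf, recvOn_syncOf]
    constructor
    · have h1 : (recvOn M i j [Act.send x]).length = 0 := by
        rw [recvOn_cons_send, recvOn_nil]; rfl
      have h2 : (sentOn M i j [Act.send x]).length ≤ 1 := by
        rw [sentOn_cons_send, sentOn_nil, List.append_nil]
        by_cases hx : M.src x = i ∧ M.dst x = j
        · rw [if_pos hx]; simp
        · rw [if_neg hx]; simp
      rw [List.length_append, List.length_append, h1]
      omega
    · rw [recvOn_cons_send, recvOn_nil, List.append_nil]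
      exact ⟨sentOn M i j [Act.send x], rfl⟩

end Aux5
section Aux6

variable {M : MessageSet} {S : System}

/-- Length bound for the specific witness shapes used in the main proof. -/
lemma witness_bound {s u : List ℕ} {a : ℕ} {t : Trace}
    (h1 : ∀ x ∈ u, ¬(M.src x = M.src a ∧ M.dst x = M.dst a))
    (ht1 : ∀ t', t' <+: t → ∀ i j, (sentOn M i j t').length ≤ (recvOn M i j t').length + 1)
    (ht2 : ∀ t', t' <+: t → sentOn M (M.src a) (M.dst a) t' = []) :
    ∀ τ', τ' <+: (syncOf s ++ Act.send a :: (syncOf u ++ t)) → ∀ i j,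
      (sentOn M i j τ').length ≤ (recvOn M i j τ').length + 1 := by
  intro τ' hpre i j
  rcases prefix_append_cases hpre with hp | ⟨η, rfl, hη⟩
  · exact (syncOf_prefix_bound hp i j).1
  · rw [sentOn_append, recvOn_append, sentOn_syncOf, recvOn_syncOf,
      List.length_append, List.length_append]
    have key : (sentOn M i j η).length ≤ (recvOn M i j η).length + 1 := by
      cases η with
      | nil => rw [sentOn_nil, recvOn_nil]; omega
      | cons y η' =>
        rw [List.cons_prefix_cons] at hη
        obtain ⟨rfl, hη⟩ := hη
        rw [sentOn_cons_send, recvOn_cons_send]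
        by_cases hij : M.src a = i ∧ M.dst a = j
        · -- on the channel of `a`: nothing else is ever sent
          have hsent : sentOn M i j η' = [] := by
            rcases prefix_append_cases hη with hp' | ⟨t', rfl, ht'⟩
            · rcases syncOf_prefix hp' with ⟨u₁, hu₁, rfl⟩ | ⟨u₁, x, hu₁, rfl⟩
              · rw [sentOn_syncOf]
                exact chanL_none (fun x hx => by
                  have := h1 x (hu₁.subset hx)
                  rw [← hij.1, ← hij.2]; exact this)
              · rw [sentOn_append, sentOn_syncOf]
                have e1 : chanL M i j u₁ = [] := chanL_none (fun x hx => by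
                  have := h1 x (hu₁.subset (by simp [hx]))
                  rw [← hij.1, ← hij.2]; exact this)
                have e2 : sentOn M i j [Act.send x] = [] := by
                  rw [sentOn_cons_send, sentOn_nil, List.append_nil, if_neg]
                  have := h1 x (hu₁.subset (by simp))
                  rw [← hij.1, ← hij.2]; exact this
                rw [e1, e2]; rfl
            · rw [sentOn_append, sentOn_syncOf]
              have e1 : chanL M i j u = [] := chanL_none (fun x hx => by
                have := h1 x hx
                rw [← hij.1, ← hij.2]; exact this)
              have e2 : sentOn M i j t' = [] := by
                rw [← hij.1, ← hij.2]; exact ht2 t' ht'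
              rw [e1, e2]; rfl
          rw [hsent, if_pos hij]
          simp
        · rw [if_neg hij, List.nil_append]
          rcases prefix_append_cases hη with hp' | ⟨t', rfl, ht'⟩
          · exact (syncOf_prefix_bound hp' i j).1
          · rw [sentOn_append, recvOn_append, sentOn_syncOf, recvOn_syncOf,
              List.length_append, List.length_append]
            have := ht1 t' ht' i j
            omega
    omega

lemma trk1_of (hfifo : Fifo M τ')
    (hb : ∀ π, π <+: τ' → ∀ i j, (sentOn M i j π).length ≤ (recvOn M i j π).length + 1)
    (ht : TraceOf M S τ') : Trk M S 1 τ' := by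
  exact ⟨ht, hfifo, fun π hπ i j => hb π hπ i j⟩

lemma ksync_inl (hsync : kSync M S 1) {τ : Trace} (h : Trk M S 1 τ) :
    TraceOf M S (syncOf (sendProj τ)) := by
  have hm : Sum.inl (sendProj τ) ∈ STc M S (Trk M S 1) := Or.inl ⟨τ, h, rfl⟩
  rw [← hsync] at hm
  rcases hm with ⟨σ, hσ, heq⟩ | ⟨σ, c, hσ, _, _, heq⟩
  · obtain ⟨hT, hSync⟩ := hσ
    have : sendProj σ = sendProj τ := by
      have := Sum.inl.inj heq
      exact this.symm
    rw [← this, ← synchronous_eq hSync]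
    exact hT
  · exact absurd heq (by simp)

lemma ksync_inr (hsync : kSync M S 1) {τ : Trace} {W : Config} (h : Trk M S 1 τ)
    (hx : Exec M S (initConfig S) τ W) (hst : Stable W) :
    Exec M S (initConfig S) (syncOf (sendProj τ)) W := by
  have hm : Sum.inr ((sendProj τ), W) ∈ STc M S (Trk M S 1) :=
    Or.inr ⟨τ, W, h, hx, hst, rfl⟩
  rw [← hsync] at hm
  rcases hm with ⟨σ, hσ, heq⟩ | ⟨σ, c, hσ, hexec, hstable, heq⟩
  · exact absurd heq (by simp)
  · obtain ⟨hT, hSync⟩ := hσ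
    have h2 := Sum.inr.inj heq
    have hsp : sendProj σ = sendProj τ := (congrArg Prod.fst h2).symm
    have hcW : c = W := (congrArg Prod.snd h2).symm
    rw [← hsp, ← synchronous_eq hSync]
    rw [← hcW]
    exact hexec

end Aux6
section Aux7

variable {M : MessageSet} {S : System}

lemma perS_eq_chanL {i j : ℕ} {l : List ℕ} (h : ∀ x ∈ l, M.src x = i → M.dst x = j) :
    perS M i l = chanL M i j l := by
  induction l with
  | nil => rfl
  | cons x l ih =>
    rw [perS_cons, chanL_cons, ih (fun y hy => h y (by simp [hy]))]
    by_cases hx : M.src x = i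
    · rw [if_pos hx, if_pos ⟨hx, h x (by simp) hx⟩]
    · rw [if_neg hx, if_neg (fun hc => hx hc.1)]

lemma succ_mod_ne {p i : ℕ} (hp : 2 ≤ p) (hi : i < p) : (i + 1) % p ≠ i := by
  intro h
  rcases Nat.lt_or_ge (i + 1) p with h1 | h1
  · rw [Nat.mod_eq_of_lt h1] at h
    omega
  · have h2 : i + 1 = p := by omega
    rw [h2, Nat.mod_self] at h
    omega

lemma perS_flatMap (i : ℕ) (l : List ℕ) (f : ℕ → List ℕ) :
    perS M i (l.flatMap f) = l.flatMap (fun j => perS M i (f j)) := by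
  induction l with
  | nil => rfl
  | cons x l ih => rw [List.flatMap_cons, List.flatMap_cons, perS_append, ih]

lemma chanL_flatMap (i j : ℕ) (l : List ℕ) (f : ℕ → List ℕ) :
    chanL M i j (l.flatMap f) = l.flatMap (fun k => chanL M i j (f k)) := by
  induction l with
  | nil => rfl
  | cons x l ih => rw [List.flatMap_cons, List.flatMap_cons, chanL_append, ih]

lemma flatMap_eq_nil_of {l : List ℕ} {f : ℕ → List ℕ} (h : ∀ i ∈ l, f i = []) :
    l.flatMap f = [] := by
  induction l with
  | nil => rfl
  | cons x l ih =>
    rw [List.flatMap_cons, h x (by simp), List.nil_append]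
    exact ih (fun y hy => h y (by simp [hy]))

lemma flatMap_eq_single {l : List ℕ} (hnd : l.Nodup) {j : ℕ} (hj : j ∈ l) {f : ℕ → List ℕ}
    (h : ∀ i ∈ l, i ≠ j → f i = []) : l.flatMap f = f j := by
  induction l with
  | nil => simp at hj
  | cons x l ih =>
    rw [List.flatMap_cons]
    rcases List.mem_cons.1 hj with rfl | hj'
    · have : l.flatMap f = [] := flatMap_eq_nil_of (fun i hi => by
        apply h i (by simp [hi])
        intro he
        subst he
        exact (List.nodup_cons.1 hnd).1 hi)
      rw [this, List.append_nil]
    · have hx : f x = [] := h x (by simp) (fun he => by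
        subst he
        exact (List.nodup_cons.1 hnd).1 hj')
      rw [hx, List.nil_append]
      exact ih (List.nodup_cons.1 hnd).2 hj' (fun i hi hij => h i (by simp [hi]) hij)

lemma mem_syncOf_send {x : ℕ} {u : List ℕ} (h : x ∈ u) : Act.send x ∈ syncOf u := by
  simp only [syncOf, List.mem_flatMap]
  exact ⟨x, h, by simp⟩

lemma sendProj_send_singleton (a : ℕ) : sendProj [Act.send a] = [a] := rfl
lemma sendProj_recv_singleton (a : ℕ) : sendProj [Act.recv a] = [] := rfl

lemma perS_perS (i : ℕ) (l : List ℕ) : perS M i (perS M i l) = perS M i l :=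
  perS_all (fun x hx => (perS_mem hx).2)

lemma projPeer_syncOf_single_src (a : ℕ) (h : M.src a ≠ M.dst a) :
    projPeer M (M.src a) (syncOf [a]) = [Act.send a] := by
  rw [projPeer_syncOf_cons, if_pos rfl, if_neg (fun he => h he.symm), syncOf_nil, projPeer_nil]
  rfl

lemma projPeer_syncOf_single_dst (a : ℕ) (h : M.src a ≠ M.dst a) :
    projPeer M (M.dst a) (syncOf [a]) = [Act.recv a] := by
  rw [projPeer_syncOf_cons, if_neg h, if_pos rfl, syncOf_nil, projPeer_nil]
  rfl

lemma projPeer_syncOf_single_other {a i : ℕ} (h1 : M.src a ≠ i) (h2 : M.dst a ≠ i) :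
    projPeer M i (syncOf [a]) = [] := by
  rw [projPeer_syncOf_cons, if_neg h1, if_neg h2, syncOf_nil, projPeer_nil]
  rfl

end Aux7
section Aux8

variable {M : MessageSet} {S : System}

/-- Builds the mixed witness execution `syncOf s ++ !a ++ syncOf u` where peer
`dst a` follows its original path and everybody else follows the paths of the
synchronous trace `syncOf ((s ++ [a]) ++ u)`. -/
lemma mixed_exec (hM : M.WF) (hring : OrientedRing M) (hp2 : 2 ≤ M.p)
    {s u : List ℕ} {a : ℕ} {c₀ cσ : Config} {mdu : ℕ}
    (hs_msgs : ∀ x ∈ s, x ∈ M.msgs) (ha : a ∈ M.msgs)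
    (hu_msgs : ∀ x ∈ u, x ∈ M.msgs) (hu_src : ∀ x ∈ u, M.src x = M.dst a)
    (hσ : Exec M S (initConfig S) (syncOf ((s ++ [a]) ++ u)) cσ)
    (hda_sync : DPath S (M.dst a) ((initConfig S).1 (M.dst a))
      (projPeer M (M.dst a) (syncOf s)) (c₀.1 (M.dst a)))
    (hda_path : DPath S (M.dst a) (c₀.1 (M.dst a)) (u.map Act.send) mdu) :
    ∃ D : Config, Exec M S (initConfig S) (syncOf s ++ Act.send a :: syncOf u) D ∧
      (∀ i, D.1 i = if i = M.dst a then mdu else cσ.1 i) ∧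
      (∀ i j, D.2 i j = if i = M.src a ∧ j = M.dst a then [a] else []) := by
  classical
  have hsada : M.src a ≠ M.dst a := (hM.2 a ha).1
  have hdalt : M.dst a < M.p := (hM.2 a ha).2.2
  have hu_dst : ∀ x ∈ u, M.dst x ≠ M.dst a := by
    intro x hx
    have h1 := (hring.2 (M.src x) (M.dst x)).1 ⟨x, hu_msgs x hx, rfl, rfl⟩
    rw [h1.2, hu_src x hx]
    exact succ_mod_ne hp2 hdalt
  -- split the per-peer paths of the synchronous execution
  have hsplit : ∀ i, ∃ m0 m1, DPath S i ((initConfig S).1 i) (projPeer M i (syncOf s)) m0 ∧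
      DPath S i m0 (projPeer M i (syncOf [a])) m1 ∧
      DPath S i m1 (projPeer M i (syncOf u)) (cσ.1 i) := by
    intro i
    have hw : projPeer M i (syncOf ((s ++ [a]) ++ u)) =
        (projPeer M i (syncOf s) ++ projPeer M i (syncOf [a])) ++ projPeer M i (syncOf u) := by
      rw [syncOf_append, syncOf_append, projPeer_append, projPeer_append]
    have hR := exec_proj hσ i
    rw [hw] at hR
    obtain ⟨m1, h01, h2⟩ := DPath.split hR
    obtain ⟨m0, h0, h1⟩ := DPath.split h01
    exact ⟨m0, m1, h0, h1, h2⟩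
  choose g0 g1 hg0 hg1 hg2 using hsplit
  -- part 1 : syncOf s
  obtain ⟨C1, hC1, hC1st, hC1buf⟩ := sync_assemble s (initConfig S)
    (fun i => if i = M.dst a then c₀.1 (M.dst a) else g0 i)
    (fun x hx => (hM.2 x (hs_msgs x hx)).1)
    (fun x _ => rfl)
    (fun i => by
      by_cases hi : i = M.dst a
      · subst hi
        rw [if_pos rfl]
        exact hda_sync
      · rw [if_neg hi]
        exact hg0 i)
  have hC1buf' : ∀ i j, C1.2 i j = [] := fun i j => hC1buf i j
  -- part 2 : the send of a
  have hC1sa : C1.1 (M.src a) = g0 (M.src a) := by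
    rw [hC1st, if_neg hsada]
  have hδa : S.delta (M.src a) (g0 (M.src a)) (Act.send a) (g1 (M.src a)) := by
    have h := hg1 (M.src a)
    rw [projPeer_syncOf_single_src a hsada] at h
    obtain ⟨m, hδ, hnil⟩ := dpath_cons h
    rw [← dpath_nil hnil] at hδ
    exact hδ
  have hstepA : Step M S C1 (Act.send a) (sendConf M C1 a (g1 (M.src a))) :=
    step_send (by rw [hC1sa]; exact hδa)
  set C2 := sendConf M C1 a (g1 (M.src a)) with hC2def
  have hC2st : ∀ i, C2.1 i = if i = M.src a then g1 (M.src a) else C1.1 i := by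
    intro i
    by_cases hi : i = M.src a
    · subst hi; simp [hC2def, sendConf]
    · simp [hC2def, sendConf, Function.update_of_ne hi, hi]
  have hC2buf : ∀ i j, C2.2 i j = if i = M.src a ∧ j = M.dst a then [a] else [] := by
    intro i j
    by_cases hij : i = M.src a ∧ j = M.dst a
    · have h : C2.2 i j = C1.2 i j ++ [a] := by
        simp only [hC2def, sendConf]
        rw [if_pos hij]
      rw [h, hC1buf', if_pos hij]
      rfl
    · have h : C2.2 i j = C1.2 i j := by
        simp only [hC2def, sendConf]
        rw [if_neg hij]
      rw [h, hC1buf', if_neg hij]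
  -- part 3 : syncOf u
  obtain ⟨C3, hC3, hC3st, hC3buf⟩ := sync_assemble u C2
    (fun i => if i = M.dst a then mdu else cσ.1 i)
    (fun x hx => (hM.2 x (hu_msgs x hx)).1)
    (fun x hx => by
      rw [hC2buf]
      rw [if_neg]
      intro hc
      exact hsada (by rw [← hc.1, hu_src x hx]))
    (fun i => by
      by_cases hi : i = M.dst a
      · subst hi
        rw [if_pos rfl]
        have hw : projPeer M (M.dst a) (syncOf u) = u.map Act.send :=
          projPeer_syncOf_sends (fun x hx => ⟨hu_src x hx, hu_dst x hx⟩)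
        have hst : C2.1 (M.dst a) = c₀.1 (M.dst a) := by
          rw [hC2st, if_neg (fun h => hsada h.symm), hC1st, if_pos rfl]
        rw [hw, hst]
        exact hda_path
      · rw [if_neg hi]
        by_cases hisa : i = M.src a
        · subst hisa
          have hst : C2.1 (M.src a) = g1 (M.src a) := by rw [hC2st, if_pos rfl]
          rw [hst]
          exact hg2 (M.src a)
        · have hg1nil : g1 i = g0 i := by
            have h := hg1 i
            rw [projPeer_syncOf_single_other (fun he => hisa he.symm) (fun he => hi he.symm)] at h
            exact dpath_nil h
          have hst : C2.1 i = g0 i := by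
            rw [hC2st, if_neg hisa, hC1st, if_neg hi]
          rw [hst, ← hg1nil]
          exact hg2 i)
  refine ⟨C3, ?_, hC3st, fun i j => by rw [hC3buf, hC2buf]⟩
  exact exec_append hC1 (Exec.step hstepA hC3)

end Aux8
section Aux9

variable {M : MessageSet} {S : System}

lemma sendProj_cons_send (a : ℕ) (τ : Trace) :
    sendProj (Act.send a :: τ) = a :: sendProj τ := by
  simp [sendProj]

lemma sendProj_cons_recv (a : ℕ) (τ : Trace) :
    sendProj (Act.recv a :: τ) = sendProj τ := by
  simp [sendProj]

lemma prefix_singleton {α : Type} {τ : List α} {x : α} (h : τ <+: [x]) :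
    τ = [] ∨ τ = [x] := by
  cases τ with
  | nil => exact Or.inl rfl
  | cons y τ' =>
    rw [List.cons_prefix_cons] at h
    obtain ⟨rfl, h⟩ := h
    right
    rw [List.prefix_nil.1 h]

/-- A normalized trace reaching a configuration. -/
def NormReach (M : MessageSet) (S : System) (c : Config) : Prop :=
  ∃ s xs : List ℕ, Exec M S (initConfig S) (syncOf s ++ xs.map Act.send) c

lemma norm_step (hM : M.WF) (hring : OrientedRing M) (hS : S.WF M) (hsync : kSync M S 1)
    {c c' : Config} {α : Act} (hn : NormReach M S c) (hstep : Step M S c α c') :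
    NormReach M S c' := by
  classical
  obtain ⟨s, xs, hex⟩ := hn
  cases α with
  | send x =>
    refine ⟨s, xs ++ [x], ?_⟩
    have hsh : syncOf s ++ (xs ++ [x]).map Act.send
        = (syncOf s ++ xs.map Act.send) ++ [Act.send x] := by
      rw [List.map_append, List.append_assoc]
      rfl
    rw [hsh]
    exact exec_append hex (Exec.step hstep (Exec.refl c'))
  | recv a =>
    obtain ⟨c₀, hex₀, hexs⟩ := exec_split hex
    have hp2 : 2 ≤ M.p := by
      by_contra hcon
      push_neg at hcon
      have h1p := hM.1
      have hp1 : M.p = 1 := by omega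
      obtain ⟨m, hm, hm1, hm2⟩ := (hring.2 0 0).2 ⟨by omega, by simp [hp1]⟩
      exact (hM.2 m hm).1 (by rw [hm1, hm2])
    have hmsg_s : ∀ x ∈ s, x ∈ M.msgs := fun x hx =>
      exec_msgs hex₀ hS (Act.send x) (mem_syncOf_send hx)
    have hmsg_xs : ∀ x ∈ xs, x ∈ M.msgs := fun x hx =>
      exec_msgs hexs hS (Act.send x) (List.mem_map.2 ⟨x, hx, rfl⟩)
    have hbuf₀ : ∀ i j, c₀.2 i j = [] := by
      intro i j
      have h := exec_chan hex₀ i j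
      rw [sentOn_syncOf, recvOn_syncOf] at h
      have h0 : (initConfig S).2 i j = [] := rfl
      rw [h0, List.nil_append] at h
      have hl := congrArg List.length h
      rw [List.length_append] at hl
      have : (c₀.2 i j).length = 0 := by omega
      exact List.eq_nil_of_length_eq_zero this
    have hbufc : ∀ i j, c.2 i j = chanL M i j xs := by
      intro i j
      have h := exec_chan hexs i j
      rw [sentOn_map_send, recvOn_map_send, hbuf₀, List.nil_append, List.nil_append] at h
      exact h.symm
    have hd : S.delta (M.dst a) (c.1 (M.dst a)) (Act.recv a) (c'.1 (M.dst a)) := hstep.1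
    have hst' : ∀ k, k ≠ M.dst a → c'.1 k = c.1 k := hstep.2.1
    have hpop : c.2 (M.src a) (M.dst a) = a :: c'.2 (M.src a) (M.dst a) := hstep.2.2.1
    have hbufp : ∀ k l, ¬(k = M.src a ∧ l = M.dst a) → c'.2 k l = c.2 k l := hstep.2.2.2
    set rs := c'.2 (M.src a) (M.dst a) with hrsdef
    have hchana : chanL M (M.src a) (M.dst a) xs = a :: rs := by
      rw [← hbufc]
      exact hpop
    have ha : a ∈ M.msgs := by
      have hmem : a ∈ chanL M (M.src a) (M.dst a) xs := by rw [hchana]; simp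
      exact hmsg_xs a (chanL_mem hmem).1
    have hsada : M.src a ≠ M.dst a := (hM.2 a ha).1
    have hdalt : M.dst a < M.p := (hM.2 a ha).2.2
    have hdir : ∀ x ∈ M.msgs, M.src x < M.p ∧ M.dst x = (M.src x + 1) % M.p :=
      fun x hx => (hring.2 (M.src x) (M.dst x)).1 ⟨x, hx, rfl, rfl⟩
    have hdsta : M.dst a = (M.src a + 1) % M.p := (hdir a ha).2
    have hpath : ∀ i, DPath S i (c₀.1 i) ((perS M i xs).map Act.send) (c.1 i) := by
      intro i
      have h := exec_proj hexs i
      rwa [projPeer_map_send] at h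
    have hrs_facts : ∀ x ∈ rs, M.src x = M.src a ∧ M.dst x = M.dst a ∧ x ∈ xs := by
      intro x hx
      have hmem : x ∈ chanL M (M.src a) (M.dst a) xs := by
        rw [hchana]
        exact List.mem_cons_of_mem a hx
      obtain ⟨h1, h2, h3⟩ := chanL_mem hmem
      exact ⟨h2, h3, h1⟩
    have hperSsa : perS M (M.src a) xs = chanL M (M.src a) (M.dst a) xs :=
      perS_eq_chanL (fun x hx hsx => by rw [(hdir x (hmsg_xs x hx)).2, hsx, ← hdsta])
    have hsa_path : DPath S (M.src a) (c₀.1 (M.src a))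
        (Act.send a :: rs.map Act.send) (c.1 (M.src a)) := by
      have h := hpath (M.src a)
      rw [hperSsa, hchana, List.map_cons] at h
      exact h
    obtain ⟨msa, hδsa, hrest_sa⟩ := dpath_cons hsa_path
    set bs := perS M (M.dst a) xs with hbsdef
    have hbs_facts : ∀ b ∈ bs, b ∈ M.msgs ∧ M.src b = M.dst a := fun b hb =>
      ⟨hmsg_xs b (perS_mem hb).1, (perS_mem hb).2⟩
    have hbs_dst : ∀ b ∈ bs, M.dst b ≠ M.dst a := by
      intro b hb
      rw [(hdir b (hbs_facts b hb).1).2, (hbs_facts b hb).2]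
      exact succ_mod_ne hp2 hdalt
    have hda_path : DPath S (M.dst a) (c₀.1 (M.dst a)) (bs.map Act.send) (c.1 (M.dst a)) :=
      hpath (M.dst a)
    have hda_sync : DPath S (M.dst a) ((initConfig S).1 (M.dst a))
        (projPeer M (M.dst a) (syncOf s)) (c₀.1 (M.dst a)) := exec_proj hex₀ (M.dst a)
    -- ============ the inductive claim ============
    have claim : ∀ u, u <+: bs → TraceOf M S (syncOf ((s ++ [a]) ++ u)) := by
      intro u
      induction u using List.reverseRecOn with
      | nil =>
        intro _
        have hW : Exec M S (initConfig S) (syncOf s ++ [Act.send a]) (sendConf M c₀ a msa) :=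
          exec_append hex₀ (Exec.step (step_send hδsa) (Exec.refl _))
        have hT : Trk M S 1 (syncOf s ++ [Act.send a]) := by
          refine ⟨⟨_, hW⟩, exec_fifo hW, ?_⟩
          intro τ' hτ' i j
          have hshape : syncOf s ++ [Act.send a]
              = syncOf s ++ Act.send a :: (syncOf ([] : List ℕ) ++ ([] : Trace)) := by
            rw [syncOf_nil]
            rfl
          rw [hshape] at hτ'
          refine witness_bound (by simp) ?_ ?_ τ' hτ' i j
          · intro t' ht' i' j'
            rw [List.prefix_nil.1 ht', sentOn_nil, recvOn_nil]
            simp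
          · intro t' ht'
            rw [List.prefix_nil.1 ht', sentOn_nil]
        have hres := ksync_inl hsync hT
        have hsp : sendProj (syncOf s ++ [Act.send a]) = (s ++ [a]) ++ [] := by
          rw [sendProj_append, sendProj_syncOf, List.append_nil, sendProj_send_singleton]
        rw [hsp] at hres
        exact hres
      | append_singleton u b ih =>
        intro hpre
        have hu : u <+: bs := List.IsPrefix.trans ⟨[b], rfl⟩ hpre
        obtain ⟨cσ, hσ⟩ := ih hu
        have hu_msgs : ∀ x ∈ u, x ∈ M.msgs := fun x hx => (hbs_facts x (hu.subset hx)).1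
        have hu_src : ∀ x ∈ u, M.src x = M.dst a := fun x hx => (hbs_facts x (hu.subset hx)).2
        obtain ⟨rest, hrest⟩ := hpre
        have hda_split : DPath S (M.dst a) (c₀.1 (M.dst a))
            (u.map Act.send ++ (Act.send b :: rest.map Act.send)) (c.1 (M.dst a)) := by
          have h := hda_path
          rw [← hrest, List.map_append, List.map_append, List.map_cons, List.append_assoc] at h
          exact h
        obtain ⟨mdu, hdu, hrest2⟩ := DPath.split hda_split
        obtain ⟨mdb, hδb, _⟩ := dpath_cons hrest2
        obtain ⟨D, hD, hDst, hDbuf⟩ :=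
          mixed_exec hM hring hp2 hmsg_s ha hu_msgs hu_src hσ hda_sync hdu
        have hsrcb : M.src b = M.dst a := (hbs_facts b (by rw [← hrest]; simp)).2
        have hδb' : S.delta (M.src b) (D.1 (M.src b)) (Act.send b) mdb := by
          rw [hsrcb, hDst, if_pos rfl]
          exact hδb
        have hWex : Exec M S (initConfig S)
            ((syncOf s ++ Act.send a :: syncOf u) ++ [Act.send b]) (sendConf M D b mdb) :=
          exec_append hD (Exec.step (step_send hδb') (Exec.refl _))
        have hshape : (syncOf s ++ Act.send a :: syncOf u) ++ [Act.send b]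
            = syncOf s ++ Act.send a :: (syncOf u ++ [Act.send b]) := by
          rw [List.append_assoc]
          rfl
        rw [hshape] at hWex
        have hT : Trk M S 1 (syncOf s ++ Act.send a :: (syncOf u ++ [Act.send b])) := by
          refine ⟨⟨_, hWex⟩, exec_fifo hWex, ?_⟩
          intro τ' hτ' i j
          refine witness_bound ?_ ?_ ?_ τ' hτ' i j
          · intro x hx hc
            exact hsada (by rw [← hc.1, hu_src x hx])
          · intro t' ht' i' j'
            rcases prefix_singleton ht' with rfl | rfl
            · rw [sentOn_nil, recvOn_nil]; simp
            · rw [sentOn_cons_send, sentOn_nil, recvOn_cons_send, recvOn_nil, List.append_nil]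
              by_cases hc : M.src b = i' ∧ M.dst b = j'
              · rw [if_pos hc]; simp
              · rw [if_neg hc]; simp
          · intro t' ht'
            rcases prefix_singleton ht' with rfl | rfl
            · rw [sentOn_nil]
            · rw [sentOn_cons_send, sentOn_nil, List.append_nil, if_neg]
              intro hc
              exact hsada (by rw [← hc.1, hsrcb])
        have hres := ksync_inl hsync hT
        have hsp : sendProj (syncOf s ++ Act.send a :: (syncOf u ++ [Act.send b]))
            = (s ++ [a]) ++ (u ++ [b]) := by
          rw [sendProj_append, sendProj_cons_send, sendProj_append, sendProj_syncOf,
            sendProj_syncOf, sendProj_send_singleton]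
          simp
        rw [hsp] at hres
        exact hres
    -- ============ the full witness and harvest ============
    obtain ⟨cσ, hσ⟩ := claim bs (List.prefix_refl bs)
    obtain ⟨D, hD, hDst, hDbuf⟩ := mixed_exec hM hring hp2 hmsg_s ha
      (fun b hb => (hbs_facts b hb).1) (fun b hb => (hbs_facts b hb).2) hσ hda_sync hda_path
    have hδr : S.delta (M.dst a) (D.1 (M.dst a)) (Act.recv a) (c'.1 (M.dst a)) := by
      rw [hDst, if_pos rfl]
      exact hd
    have hbD : D.2 (M.src a) (M.dst a) = a :: ([] : List ℕ) := by
      rw [hDbuf, if_pos ⟨rfl, rfl⟩]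
    have hstepR : Step M S D (Act.recv a) (recvConf M D a (c'.1 (M.dst a))) := step_recv hδr hbD
    set C4 := recvConf M D a (c'.1 (M.dst a)) with hC4def
    have hFWex : Exec M S (initConfig S)
        ((syncOf s ++ Act.send a :: syncOf bs) ++ [Act.recv a]) C4 :=
      exec_append hD (Exec.step hstepR (Exec.refl _))
    have hC4buf : ∀ i j, C4.2 i j = [] := by
      intro i j
      by_cases hij : i = M.src a ∧ j = M.dst a
      · have h : C4.2 i j = (D.2 i j).tail := by
          simp only [hC4def, recvConf]
          rw [if_pos hij]
        rw [h, hDbuf, if_pos hij]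
        rfl
      · have h : C4.2 i j = D.2 i j := by
          simp only [hC4def, recvConf]
          rw [if_neg hij]
        rw [h, hDbuf, if_neg hij]
    have hC4st : ∀ i, C4.1 i = if i = M.dst a then c'.1 (M.dst a) else cσ.1 i := by
      intro i
      by_cases hi : i = M.dst a
      · subst hi
        simp [hC4def, recvConf]
      · simp only [hC4def, recvConf]
        rw [if_neg hi, Function.update_of_ne hi, hDst, if_neg hi]
    have hshapeF : (syncOf s ++ Act.send a :: syncOf bs) ++ [Act.recv a]
        = syncOf s ++ Act.send a :: (syncOf bs ++ [Act.recv a]) := by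
      rw [List.append_assoc]
      rfl
    rw [hshapeF] at hFWex
    have hT : Trk M S 1 (syncOf s ++ Act.send a :: (syncOf bs ++ [Act.recv a])) := by
      refine ⟨⟨_, hFWex⟩, exec_fifo hFWex, ?_⟩
      intro τ' hτ' i j
      refine witness_bound ?_ ?_ ?_ τ' hτ' i j
      · intro x hx hc
        exact hsada (by rw [← hc.1, (hbs_facts x hx).2])
      · intro t' ht' i' j'
        rcases prefix_singleton ht' with rfl | rfl
        · rw [sentOn_nil, recvOn_nil]; simp
        · rw [sentOn_cons_recv, sentOn_nil]
          simp
      · intro t' ht'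
        rcases prefix_singleton ht' with rfl | rfl
        · rw [sentOn_nil]
        · rw [sentOn_cons_recv, sentOn_nil]
    have hstable : Stable C4 := fun i j => hC4buf i j
    have hSig := ksync_inr hsync hT hFWex hstable
    have hspF : sendProj (syncOf s ++ Act.send a :: (syncOf bs ++ [Act.recv a]))
        = s ++ a :: bs := by
      rw [sendProj_append, sendProj_cons_send, sendProj_append, sendProj_syncOf,
        sendProj_syncOf, sendProj_recv_singleton, List.append_nil]
    rw [hspF] at hSig
    -- harvest the repaired path of peer `dst a`
    have hPda : DPath S (M.dst a) ((initConfig S).1 (M.dst a))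
        ((projPeer M (M.dst a) (syncOf s) ++ [Act.recv a]) ++ bs.map Act.send)
        (c'.1 (M.dst a)) := by
      have h := exec_proj hSig (M.dst a)
      have hw : projPeer M (M.dst a) (syncOf (s ++ a :: bs))
          = (projPeer M (M.dst a) (syncOf s) ++ [Act.recv a]) ++ bs.map Act.send := by
        have h1 : s ++ a :: bs = (s ++ [a]) ++ bs := by simp
        rw [h1, syncOf_append, syncOf_append, projPeer_append, projPeer_append,
          projPeer_syncOf_single_dst a hsada,
          projPeer_syncOf_sends (fun x hx => ⟨(hbs_facts x hx).2, hbs_dst x hx⟩)]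
      rw [hw] at h
      rw [hC4st, if_pos rfl] at h
      exact h
    obtain ⟨m1, hP01, hPr⟩ := DPath.split hPda
    obtain ⟨m0, hP1, hPcons⟩ := DPath.split hP01
    obtain ⟨m2, hδra, hnil2⟩ := dpath_cons hPcons
    have hm12 : m1 = m2 := dpath_nil hnil2
    rw [hm12] at hPr
    -- ============ final normalized execution ============
    have hsalt : M.src a < M.p := (hdir a ha).1
    set others := (List.range M.p).flatMap
      (fun i => if i = M.src a ∨ i = M.dst a then [] else perS M i xs) with hothersdef
    set L' := bs ++ (rs ++ others) with hL'def
    have hmsg_sa : ∀ x ∈ s ++ [a], x ∈ M.msgs := by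
      intro x hx
      rcases List.mem_append.1 hx with h | h
      · exact hmsg_s x h
      · simp at h
        subst h
        exact ha
    -- part A : the synchronous prefix  syncOf (s ++ [a])
    obtain ⟨D1, hD1, hD1st, hD1buf⟩ := sync_assemble (s ++ [a]) (initConfig S)
      (fun i => if i = M.dst a then m2 else if i = M.src a then msa else c₀.1 i)
      (fun x hx => (hM.2 x (hmsg_sa x hx)).1)
      (fun _ _ => rfl)
      (fun i => by
        by_cases hi : i = M.dst a
        · subst hi
          rw [if_pos rfl]
          have hw : projPeer M (M.dst a) (syncOf (s ++ [a]))
              = projPeer M (M.dst a) (syncOf s) ++ [Act.recv a] := by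
            rw [syncOf_append, projPeer_append, projPeer_syncOf_single_dst a hsada]
          rw [hw]
          exact DPath.append hP1 (DPath.cons hδra (DPath.nil _))
        · rw [if_neg hi]
          by_cases hisa : i = M.src a
          · subst hisa
            rw [if_pos rfl]
            have hw : projPeer M (M.src a) (syncOf (s ++ [a]))
                = projPeer M (M.src a) (syncOf s) ++ [Act.send a] := by
              rw [syncOf_append, projPeer_append, projPeer_syncOf_single_src a hsada]
            rw [hw]
            exact DPath.append (exec_proj hex₀ (M.src a)) (DPath.cons hδsa (DPath.nil _))
          · rw [if_neg hisa]
            have hw : projPeer M i (syncOf (s ++ [a])) = projPeer M i (syncOf s) := by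
              rw [syncOf_append, projPeer_append,
                projPeer_syncOf_single_other (fun he => hisa he.symm) (fun he => hi he.symm),
                List.append_nil]
            rw [hw]
            exact exec_proj hex₀ i)
    -- perS computations on L'
    have hperS_bs_da : perS M (M.dst a) bs = bs := by
      rw [hbsdef]
      exact perS_perS _ _
    have hperS_rs_sa : perS M (M.src a) rs = rs := perS_all (fun x hx => (hrs_facts x hx).1)
    have hoth : ∀ i, i ≠ M.src a → i ≠ M.dst a → i < M.p → perS M i others = perS M i xs := by
      intro i hisa hida hip
      rw [hothersdef, perS_flatMap]
      rw [flatMap_eq_single List.nodup_range (List.mem_range.2 hip)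
        (f := fun j => perS M i (if j = M.src a ∨ j = M.dst a then [] else perS M j xs))
        (by
          intro j hj hji
          by_cases hc : j = M.src a ∨ j = M.dst a
          · rw [if_pos hc]
            rfl
          · rw [if_neg hc]
            exact perS_none (fun x hx => by rw [(perS_mem hx).2]; exact hji))]
      rw [if_neg (by tauto)]
      exact perS_perS _ _
    have hoth_nil : ∀ i, (∀ j, j ∈ List.range M.p → j ≠ i ∨ (i = M.src a ∨ i = M.dst a)) →
        True := fun _ _ => trivial
    have hoth_none : ∀ i, (i = M.src a ∨ i = M.dst a ∨ M.p ≤ i) → perS M i others = [] := by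
      intro i hi
      rw [hothersdef, perS_flatMap]
      apply flatMap_eq_nil_of
      intro j hj
      by_cases hc : j = M.src a ∨ j = M.dst a
      · rw [if_pos hc]
        rfl
      · rw [if_neg hc]
        refine perS_none (fun x hx => by
          rw [(perS_mem hx).2]
          intro he
          subst he
          rcases hi with h | h | h
          · exact hc (Or.inl h)
          · exact hc (Or.inr h)
          · exact absurd (List.mem_range.1 hj) (by omega))
    have hperSL : ∀ i, perS M i L' = perS M i bs ++ (perS M i rs ++ perS M i others) := by
      intro i
      rw [hL'def, perS_append, perS_append]
    have hperS_bs_none : ∀ i, i ≠ M.dst a → perS M i bs = [] := fun i hi =>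
      perS_none (fun x hx => by rw [(hbs_facts x hx).2]; exact fun he => hi he.symm)
    have hperS_rs_none : ∀ i, i ≠ M.src a → perS M i rs = [] := fun i hi =>
      perS_none (fun x hx => by rw [(hrs_facts x hx).1]; exact fun he => hi he.symm)
    -- part B : the trailing sends
    obtain ⟨D2, hD2, hD2st, hD2buf⟩ := sends_assemble L' D1 (fun i => c'.1 i)
      (fun i => by
        rw [projPeer_map_send, hperSL]
        by_cases hi : i = M.dst a
        · subst hi
          rw [hperS_bs_da, hperS_rs_none _ (fun he => hsada he.symm),
            hoth_none _ (Or.inr (Or.inl rfl)), List.append_nil, List.append_nil]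
          have hst : D1.1 (M.dst a) = m2 := by rw [hD1st, if_pos rfl]
          rw [hst]
          exact hPr
        · by_cases hisa : i = M.src a
          · subst hisa
            rw [hperS_bs_none _ hi, hperS_rs_sa, hoth_none _ (Or.inl rfl),
              List.append_nil, List.nil_append]
            have hst : D1.1 (M.src a) = msa := by rw [hD1st, if_neg hi, if_pos rfl]
            have hc' : c'.1 (M.src a) = c.1 (M.src a) := hst' _ hi
            rw [hst, hc']
            exact hrest_sa
          · by_cases hip : i < M.p
            · rw [hperS_bs_none _ hi, hperS_rs_none _ hisa, hoth i hisa hi hip,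
                List.nil_append, List.nil_append]
              have hst : D1.1 i = c₀.1 i := by rw [hD1st, if_neg hi, if_neg hisa]
              have hc' : c'.1 i = c.1 i := hst' _ hi
              rw [hst, hc']
              exact hpath i
            · rw [hperS_bs_none _ hi, hperS_rs_none _ hisa,
                hoth_none _ (Or.inr (Or.inr (by omega))), List.nil_append, List.nil_append]
              have hps : perS M i xs = [] := perS_none (fun x hx => by
                have := (hdir x (hmsg_xs x hx)).1
                omega)
              have hcc : c.1 i = c₀.1 i := by
                have h := hpath i
                rw [hps] at h
                exact dpath_nil h
              have hst : D1.1 i = c₀.1 i := by rw [hD1st, if_neg hi, if_neg hisa]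
              have hc' : c'.1 i = c.1 i := hst' _ hi
              rw [hst, hc', hcc, List.map_nil]
              exact DPath.nil _)
    -- the buffers of the final configuration
    have hchanL' : ∀ i j, chanL M i j L' = c'.2 i j := by
      intro i j
      rw [hL'def, chanL_append, chanL_append]
      by_cases hij : i = M.src a ∧ j = M.dst a
      · obtain ⟨rfl, rfl⟩ := hij
        have ho0 : chanL M (M.src a) (M.dst a) others = [] := by
          refine chanL_none (fun x hx => ?_)
          rw [hothersdef] at hx
          obtain ⟨jj, hjj, hxin⟩ := List.mem_flatMap.1 hx
          by_cases hc : jj = M.src a ∨ jj = M.dst a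
          · rw [if_pos hc] at hxin
            simp at hxin
          · rw [if_neg hc] at hxin
            intro hcon
            exact hc (Or.inl (by rw [← hcon.1, (perS_mem hxin).2]))
        rw [chanL_none (l := bs) (fun x hx => fun hc => hsada (by rw [← hc.1, (hbs_facts x hx).2])),
          chanL_all (l := rs) (fun x hx => ⟨(hrs_facts x hx).1, (hrs_facts x hx).2.1⟩),
          ho0, List.nil_append, List.append_nil]
      · rw [hbufp i j hij, hbufc]
        have hrs0 : chanL M i j rs = [] := chanL_none (fun x hx hc => hij
          ⟨by rw [← hc.1, (hrs_facts x hx).1], by rw [← hc.2, (hrs_facts x hx).2.1]⟩)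
        by_cases hi : i = M.dst a
        · subst hi
          have hb : chanL M (M.dst a) j bs = chanL M (M.dst a) j xs := by
            rw [hbsdef]
            exact chanL_perS _ _ _
          have ho : chanL M (M.dst a) j others = [] := by
            rw [hothersdef, chanL_flatMap]
            apply flatMap_eq_nil_of
            intro jj hjj
            by_cases hc : jj = M.src a ∨ jj = M.dst a
            · rw [if_pos hc]
              rfl
            · rw [if_neg hc]
              exact chanL_none (fun x hx hcon =>
                hc (Or.inr (by rw [← hcon.1, (perS_mem hx).2])))
          rw [hb, hrs0, ho, List.append_nil, List.append_nil]
        · have hb : chanL M i j bs = [] := chanL_none (fun x hx hc =>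
            hi (by rw [← hc.1, (hbs_facts x hx).2]))
          by_cases hisa : i = M.src a
          · subst hisa
            have hjda : j ≠ M.dst a := fun he => hij ⟨rfl, he⟩
            have ho : chanL M (M.src a) j others = [] := by
              rw [hothersdef, chanL_flatMap]
              apply flatMap_eq_nil_of
              intro jj hjj
              by_cases hc : jj = M.src a ∨ jj = M.dst a
              · rw [if_pos hc]
                rfl
              · rw [if_neg hc]
                exact chanL_none (fun x hx hcon =>
                  hc (Or.inl (by rw [← hcon.1, (perS_mem hx).2])))
            have hx0 : chanL M (M.src a) j xs = [] := chanL_none (fun x hx hc => by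
              have hdx : M.dst x = M.dst a := by
                rw [(hdir x (hmsg_xs x hx)).2, hc.1, ← hdsta]
              exact hjda (by rw [← hc.2, hdx]))
            rw [hb, hrs0, ho, hx0]
            rfl
          · by_cases hip : i < M.p
            · have ho : chanL M i j others = chanL M i j xs := by
                rw [hothersdef, chanL_flatMap]
                rw [flatMap_eq_single List.nodup_range (List.mem_range.2 hip)
                  (f := fun jj => chanL M i j (if jj = M.src a ∨ jj = M.dst a then []
                    else perS M jj xs))
                  (by
                    intro jj hjj hji
                    by_cases hc : jj = M.src a ∨ jj = M.dst a
                    · rw [if_pos hc]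
                      rfl
                    · rw [if_neg hc]
                      exact chanL_none (fun x hx hcon =>
                        hji (by rw [← hcon.1, (perS_mem hx).2])))]
                rw [if_neg (by tauto)]
                exact chanL_perS _ _ _
              rw [hb, hrs0, ho]
              rfl
            · have ho : chanL M i j others = [] := by
                rw [hothersdef, chanL_flatMap]
                apply flatMap_eq_nil_of
                intro jj hjj
                by_cases hc : jj = M.src a ∨ jj = M.dst a
                · rw [if_pos hc]
                  rfl
                · rw [if_neg hc]
                  refine chanL_none (fun x hx hcon => ?_)
                  have h1 := List.mem_range.1 hjj
                  have h2 := (perS_mem hx).2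
                  omega
              have hx0 : chanL M i j xs = [] := chanL_none (fun x hx hc => by
                have := (hdir x (hmsg_xs x hx)).1
                omega)
              rw [hb, hrs0, ho, hx0]
              rfl
    refine ⟨s ++ [a], L', ?_⟩
    refine exec_congr (exec_append hD1 hD2) c' (fun i => hD2st i) (fun i j => ?_)
    rw [hD2buf, hD1buf, ← hchanL' i j]
    rfl

end Aux9
/-- Trace normalization: on an oriented ring, every trace of a
1-synchronizable system is S-equivalent to a normalized trace (a synchronous
trace followed by sends only). -/
theorem trace_normalization (M : MessageSet) (S : System)
    (hM : M.WF) (hring : OrientedRing M)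
    (hS : S.WF M) (hfin : S.FiniteDelta)
    (hsync : kSync M S 1)
    (τ : Trace) (hτ : TraceOf M S τ) :
    ∃ (τ₀ : Trace) (l : List ℕ),
      Synchronous τ₀ ∧
      TraceOf M S (τ₀ ++ l.map Act.send) ∧
      SEquiv M S τ (τ₀ ++ l.map Act.send) := by
  obtain ⟨cτ, hexecτ⟩ := hτ
  have main : ∀ (τ' : Trace) (d : Config), Exec M S (initConfig S) τ' d → NormReach M S d := by
    intro τ'
    induction τ' using List.reverseRecOn with
    | nil =>
      intro d hd
      rw [exec_nil hd]
      exact ⟨[], [], Exec.refl _⟩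
    | append_singleton τ'' α ih =>
      intro d hd
      obtain ⟨m, h1, h2⟩ := exec_snoc hd
      exact norm_step hM hring hS hsync (ih m h1) h2
  obtain ⟨s, xs, hexecν⟩ := main τ cτ hexecτ
  exact ⟨syncOf s, xs, ⟨s, rfl⟩, ⟨cτ, hexecν⟩, ⟨cτ, hexecτ, hexecν⟩⟩
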